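/- arXiv:2407.03692 — 2 statements merged into one kernel-verified Lean document; each statement's English description precedes it below -/
import Mathlib

section
/- For integer strings A = (a_1,…,a_n) and B = (b_1,…,b_m), the pair ((a_1,…,a_n),(b_1,…,b_m)) is complementary if and only if the pair of reversed strings ((a_n,…,a_1),(b_m,…,b_1)) is complementary. -/
/-!
Reversing both strings turns each 2-final expansion into a 2-initial expansion, acting at the
opposite ends: `(A ++ [a], B) ↦ (A ++ [a + 1], 2 :: B)` or `(A, b :: B) ↦ (A ++ [2], (b + 1) :: B)`.
On pairs of nonempty strings every initial expansion commutes with every final one, and both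
initial expansions of `((2),(2))` are final expansions of it. Hence the complementary pairs are
closed under initial expansions, and mirroring a derivation step by step shows that the reversed
pair is complementary; reversal is an involution, which gives the converse.
-/

/-- A 2-final expansion of a pair of integer strings: it transforms
`((a₁,…,aₙ),(b₁,…,bₘ))` into either `((a₁+1,a₂,…,aₙ),(b₁,…,bₘ,2))` or
`((2,a₁,…,aₙ),(b₁,…,bₘ₋₁,bₘ+1))`. -/
def TwoFinalExp : List ℤ × List ℤ → List ℤ × List ℤ → Prop := fun P Q =>
  (∃ (a : ℤ) (A B : List ℤ), P = (a :: A, B) ∧ Q = ((a + 1) :: A, B ++ [2])) ∨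
  (∃ (A B : List ℤ) (b : ℤ), P = (A, B ++ [b]) ∧ Q = (2 :: A, B ++ [b + 1]))

/-- A pair of integer strings is complementary if it is obtained from the pair
`((2),(2))` by a finite (possibly empty) sequence of 2-final expansions. -/
def Complementary (A B : List ℤ) : Prop :=
  Relation.ReflTransGen TwoFinalExp ([2], [2]) (A, B)

namespace List

variable {α : Type*}

theorem modifyLast_cons_of_ne_nil (f : α → α) (a : α) {l : List α} (hl : l ≠ []) :
    (a :: l).modifyLast f = a :: l.modifyLast f :=
  modifyLast_append_of_right_ne_nil f [a] l hl

theorem modifyHead_append_of_left_ne_nil (f : α → α) {l₁ : List α} (l₂ : List α)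
    (hl : l₁ ≠ []) : (l₁ ++ l₂).modifyHead f = l₁.modifyHead f ++ l₂ := by
  obtain ⟨a, l, rfl⟩ := exists_cons_of_ne_nil hl
  rfl

theorem reverse_modifyHead (f : α → α) (l : List α) :
    (l.modifyHead f).reverse = l.reverse.modifyLast f := by
  cases l with
  | nil => rfl
  | cons a l => simp [modifyLast_concat]

theorem reverse_modifyLast (f : α → α) (l : List α) :
    (l.modifyLast f).reverse = l.reverse.modifyHead f := by
  rw [← reverse_reverse (l.reverse.modifyHead f), reverse_modifyHead, reverse_reverse]

@[simp]
theorem modifyLast_eq_nil_iff {f : α → α} {l : List α} : l.modifyLast f = [] ↔ l = [] := by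
  rw [← reverse_eq_nil_iff, reverse_modifyLast, modifyHead_eq_nil_iff, reverse_eq_nil_iff]

theorem modifyLast_modifyHead {f g : α → α} (h : Function.Commute f g) (l : List α) :
    (l.modifyHead f).modifyLast g = (l.modifyLast g).modifyHead f := by
  rcases l with _ | ⟨a, l⟩
  · rfl
  rcases eq_nil_or_concat' l with rfl | ⟨l, b, rfl⟩
  · exact congrArg (· :: []) (h a).symm
  · rw [modifyHead_cons, ← cons_append, ← cons_append, modifyLast_concat, modifyLast_concat]
    rfl

end List

theorem Relation.ReflTransGen.apply_of_map {α : Type*} {r : α → α → Prop} {a b : α}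
    (hb : ReflTransGen r a b) (g : α → α) (ha : ReflTransGen r a (g a))
    (hg : ∀ x y, ReflTransGen r a x → r x y → r (g x) (g y)) :
    ReflTransGen r a (g b) := by
  induction hb with
  | refl => exact ha
  | tail hx hxy ih => exact ih.tail (hg _ _ hx hxy)

open List Relation

def finalExpFirst (P : List ℤ × List ℤ) : List ℤ × List ℤ :=
  (P.1.modifyHead (· + 1), P.2 ++ [2])

def finalExpSecond (P : List ℤ × List ℤ) : List ℤ × List ℤ :=
  (2 :: P.1, P.2.modifyLast (· + 1))

def initialExpFirst (P : List ℤ × List ℤ) : List ℤ × List ℤ :=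
  (P.1.modifyLast (· + 1), 2 :: P.2)

def initialExpSecond (P : List ℤ × List ℤ) : List ℤ × List ℤ :=
  (P.1 ++ [2], P.2.modifyHead (· + 1))

theorem twoFinalExp_iff {P Q : List ℤ × List ℤ} :
    TwoFinalExp P Q ↔ (P.1 ≠ [] ∧ Q = finalExpFirst P) ∨ (P.2 ≠ [] ∧ Q = finalExpSecond P) := by
  obtain ⟨A, B⟩ := P
  constructor
  · rintro (⟨a, A, B, h, rfl⟩ | ⟨A, B, b, h, rfl⟩) <;> cases h
    · exact Or.inl ⟨cons_ne_nil _ _, rfl⟩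
    · exact Or.inr ⟨concat_ne_nil _ _, by simp [finalExpSecond, modifyLast_concat]⟩
  · rintro (⟨hA, rfl⟩ | ⟨hB, rfl⟩)
    · obtain ⟨a, A, rfl⟩ := exists_cons_of_ne_nil hA
      exact Or.inl ⟨a, A, B, rfl, rfl⟩
    · obtain ⟨B, b, rfl⟩ := (eq_nil_or_concat' B).resolve_left hB
      exact Or.inr ⟨A, B, b, rfl, by simp [finalExpSecond, modifyLast_concat]⟩

theorem map_reverse_finalExpFirst (P : List ℤ × List ℤ) :
    Prod.map reverse reverse (finalExpFirst P) = initialExpFirst (Prod.map reverse reverse P) := by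
  simp [finalExpFirst, initialExpFirst, reverse_modifyHead]

theorem map_reverse_finalExpSecond (P : List ℤ × List ℤ) :
    Prod.map reverse reverse (finalExpSecond P) = initialExpSecond (Prod.map reverse reverse P) := by
  simp [finalExpSecond, initialExpSecond, reverse_modifyLast]

section Commute

variable {P : List ℤ × List ℤ}

theorem initialExpFirst_finalExpFirst (P : List ℤ × List ℤ) :
    initialExpFirst (finalExpFirst P) = finalExpFirst (initialExpFirst P) :=
  Prod.ext (modifyLast_modifyHead (Function.Commute.refl _) _) rfl

theorem initialExpSecond_finalExpSecond (P : List ℤ × List ℤ) :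
    initialExpSecond (finalExpSecond P) = finalExpSecond (initialExpSecond P) :=
  Prod.ext rfl (modifyLast_modifyHead (Function.Commute.refl _) _).symm

theorem initialExpFirst_finalExpSecond (h₁ : P.1 ≠ []) (h₂ : P.2 ≠ []) :
    initialExpFirst (finalExpSecond P) = finalExpSecond (initialExpFirst P) :=
  Prod.ext (modifyLast_cons_of_ne_nil _ _ h₁) (modifyLast_cons_of_ne_nil _ _ h₂).symm

theorem initialExpSecond_finalExpFirst (h₁ : P.1 ≠ []) (h₂ : P.2 ≠ []) :
    initialExpSecond (finalExpFirst P) = finalExpFirst (initialExpSecond P) :=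
  Prod.ext (modifyHead_append_of_left_ne_nil _ _ h₁).symm
    (modifyHead_append_of_left_ne_nil _ _ h₂)

end Commute

namespace TwoFinalExp

variable {P Q : List ℤ × List ℤ}

theorem initialExpFirst (h : TwoFinalExp P Q) (h₁ : P.1 ≠ []) (h₂ : P.2 ≠ []) :
    TwoFinalExp (initialExpFirst P) (initialExpFirst Q) := by
  rcases twoFinalExp_iff.1 h with ⟨-, rfl⟩ | ⟨-, rfl⟩
  · exact twoFinalExp_iff.2 <| .inl ⟨by simpa [initialExpFirst] using h₁,
      initialExpFirst_finalExpFirst P⟩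
  · exact twoFinalExp_iff.2 <| .inr ⟨cons_ne_nil _ _, initialExpFirst_finalExpSecond h₁ h₂⟩

theorem initialExpSecond (h : TwoFinalExp P Q) (h₁ : P.1 ≠ []) (h₂ : P.2 ≠ []) :
    TwoFinalExp (initialExpSecond P) (initialExpSecond Q) := by
  rcases twoFinalExp_iff.1 h with ⟨-, rfl⟩ | ⟨-, rfl⟩
  · exact twoFinalExp_iff.2 <| .inl ⟨concat_ne_nil _ _, initialExpSecond_finalExpFirst h₁ h₂⟩
  · exact twoFinalExp_iff.2 <| .inr ⟨by simpa [initialExpSecond] using h₂,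
      initialExpSecond_finalExpSecond P⟩

end TwoFinalExp

section Reachable

variable {P : List ℤ × List ℤ}

theorem ne_nil_of_reflTransGen_twoFinalExp (hP : ReflTransGen TwoFinalExp ([2], [2]) P) :
    P.1 ≠ [] ∧ P.2 ≠ [] := by
  induction hP with
  | refl => simp
  | tail _ hQ ih =>
    rcases twoFinalExp_iff.1 hQ with ⟨-, rfl⟩ | ⟨-, rfl⟩
    · simp [finalExpFirst, ih.1]
    · simp [finalExpSecond, ih.2]

theorem reflTransGen_twoFinalExp_initialExpFirst (hP : ReflTransGen TwoFinalExp ([2], [2]) P) :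
    ReflTransGen TwoFinalExp ([2], [2]) (initialExpFirst P) :=
  hP.apply_of_map _ (.single (twoFinalExp_iff.2 (.inl ⟨cons_ne_nil _ _, rfl⟩)))
    fun _ _ hx hxy ↦ hxy.initialExpFirst (ne_nil_of_reflTransGen_twoFinalExp hx).1
      (ne_nil_of_reflTransGen_twoFinalExp hx).2

theorem reflTransGen_twoFinalExp_initialExpSecond (hP : ReflTransGen TwoFinalExp ([2], [2]) P) :
    ReflTransGen TwoFinalExp ([2], [2]) (initialExpSecond P) :=
  hP.apply_of_map _ (.single (twoFinalExp_iff.2 (.inr ⟨cons_ne_nil _ _, rfl⟩)))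
    fun _ _ hx hxy ↦ hxy.initialExpSecond (ne_nil_of_reflTransGen_twoFinalExp hx).1
      (ne_nil_of_reflTransGen_twoFinalExp hx).2

theorem reflTransGen_twoFinalExp_map_reverse (hP : ReflTransGen TwoFinalExp ([2], [2]) P) :
    ReflTransGen TwoFinalExp ([2], [2]) (Prod.map reverse reverse P) := by
  induction hP with
  | refl => rfl
  | tail _ hQ ih =>
    rcases twoFinalExp_iff.1 hQ with ⟨-, rfl⟩ | ⟨-, rfl⟩
    · rw [map_reverse_finalExpFirst]
      exact reflTransGen_twoFinalExp_initialExpFirst ih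
    · rw [map_reverse_finalExpSecond]
      exact reflTransGen_twoFinalExp_initialExpSecond ih

end Reachable

/-- The pair `((a₁,…,aₙ),(b₁,…,bₘ))` is complementary if and only if the pair of
reversed strings `((aₙ,…,a₁),(bₘ,…,b₁))` is complementary. -/
theorem stmt3 (A B : List ℤ) :
    Complementary A B ↔ Complementary A.reverse B.reverse :=
  ⟨reflTransGen_twoFinalExp_map_reverse,
    fun h ↦ by simpa [Complementary] using reflTransGen_twoFinalExp_map_reverse h⟩
end

section
/- Let A = (a_1,…,a_n) and B = (b_1,…,b_m) be integer strings with all entries at least 2, and set p = K(a_1,…,a_n), q = K(a_2,…,a_n), r = K(b_1,…,b_m), s = K(b_2,…,b_m), so that p > q > 0 and r > s > 0 with gcd(p,q) = gcd(r,s) = 1. Let q* be the unique integer with 0 < q* < p and q·q* ≡ 1 (mod p). Then the pair (A, B) is complementary if and only if q*/p + s/r = 1 in the rational numbers. -/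
/-- The negative continuant `K(a₁,…,aₙ)`, defined by `K() = 1`, `K(a) = a`, and
`K(a₁,a₂,…,aₙ) = a₁·K(a₂,…,aₙ) − K(a₃,…,aₙ)`. -/
def negCont : List ℤ → ℤ
  | [] => 1
  | [a] => a
  | a :: b :: l => a * negCont (b :: l) - negCont l

/-!
With `M(a) = !![a, -1; 1, 0]`, the product `M(a₁) ⋯ M(aₙ)` has first column `(p, q)`, determinant
`1`, and top-right entry `-K(a₁,…,aₙ₋₁)`, so that `q* = K(a₁,…,aₙ₋₁)`. Each 2-final expansion
multiplies the matrices of the two strings by factors intertwined by fixed unimodular matrices, so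
along a complementary pair `M(B) = !![1, 0; 1, 1] * M(A)ᵀ * !![1, -1; 0, 1]`, i.e. `r = p` and
`s = p - q*`. Conversely every string with entries `≥ 2` has a complementary partner, and a string
with entries `≥ 2` is determined by `(K(B), K(B.tail))` (its Hirzebruch–Jung continued fraction),
so `r = p`, `s = p - q*` force `B` to be that partner. Both fractions being reduced, this pair of
equalities is equivalent to `q*/p + s/r = 1`.
-/

open Matrix

def contStep (a : ℤ) : Matrix (Fin 2) (Fin 2) ℤ := !![a, -1; 1, 0]

/-- `contMat l = ∏ !![aᵢ, -1; 1, 0]` has first column `(K(l), K(l.tail))`, except that its entry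
`(1, 0)` is `0` rather than `K([].tail) = 1` for `l = []`. -/
def contMat (l : List ℤ) : Matrix (Fin 2) (Fin 2) ℤ := (l.map contStep).prod

lemma contStep_add_one (a : ℤ) : contStep (a + 1) = !![1, 1; 0, 1] * contStep a := by
  simp [contStep]

lemma contStep_add_one' (a : ℤ) : contStep (a + 1) = contStep a * !![1, 0; -1, 1] := by
  simp [contStep]

@[simp] lemma contMat_nil : contMat [] = 1 := rfl

lemma contMat_cons (a : ℤ) (l : List ℤ) : contMat (a :: l) = contStep a * contMat l := rfl

lemma contMat_append_singleton (l : List ℤ) (b : ℤ) :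
    contMat (l ++ [b]) = contMat l * contStep b := by
  simp [contMat]

@[simp] lemma contMat_cons_zero_zero (a : ℤ) (l : List ℤ) :
    contMat (a :: l) 0 0 = a * contMat l 0 0 - contMat l 1 0 := by
  simp [contMat_cons, contStep, mul_apply, Fin.sum_univ_two, sub_eq_add_neg]

@[simp] lemma contMat_cons_one_zero (a : ℤ) (l : List ℤ) :
    contMat (a :: l) 1 0 = contMat l 0 0 := by
  simp [contMat_cons, contStep, mul_apply, Fin.sum_univ_two]

lemma contMat_zero_zero : ∀ l : List ℤ, contMat l 0 0 = negCont l
  | [] => rfl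
  | [a] => by simp [negCont]
  | a :: b :: l => by
    rw [contMat_cons_zero_zero, contMat_cons_one_zero, contMat_zero_zero (b :: l),
      contMat_zero_zero l, negCont]

lemma negCont_tail_cons (a : ℤ) (l : List ℤ) : negCont (a :: l).tail = contMat (a :: l) 1 0 := by
  rw [contMat_cons_one_zero, contMat_zero_zero, List.tail_cons]

lemma contMat_det (l : List ℤ) :
    contMat l 0 0 * contMat l 1 1 - contMat l 0 1 * contMat l 1 0 = 1 := by
  rw [← det_fin_two]
  induction l with
  | nil => simp
  | cons a l ih => rw [contMat_cons, det_mul, ih, contStep, det_fin_two_of]; ring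

lemma isCoprime_contMat_one_zero (l : List ℤ) : IsCoprime (contMat l 1 0) (contMat l 0 0) :=
  ⟨-contMat l 0 1, contMat l 1 1, by linear_combination contMat_det l⟩

lemma isCoprime_neg_contMat_zero_one (l : List ℤ) :
    IsCoprime (-contMat l 0 1) (contMat l 0 0) :=
  ⟨contMat l 1 0, contMat l 1 1, by linear_combination contMat_det l⟩

lemma contMat_one_zero_mul_neg_modEq_one (l : List ℤ) :
    contMat l 1 0 * -contMat l 0 1 ≡ 1 [ZMOD contMat l 0 0] :=
  Int.modEq_iff_dvd.mpr ⟨contMat l 1 1, by linear_combination -contMat_det l⟩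

lemma contMat_one_zero_nonneg_lt (l : List ℤ) (hl : ∀ a ∈ l, 2 ≤ a) :
    0 ≤ contMat l 1 0 ∧ contMat l 1 0 < contMat l 0 0 := by
  induction l with
  | nil => simp
  | cons a l ih =>
    obtain ⟨h₀, h₁⟩ := ih fun x hx => hl x (List.mem_cons_of_mem a hx)
    have ha : 2 ≤ a := hl a List.mem_cons_self
    simp only [contMat_cons_zero_zero, contMat_cons_one_zero]
    constructor <;> nlinarith

lemma contMat_cons_one_zero_pos (a : ℤ) (l : List ℤ) (hl : ∀ x ∈ l, 2 ≤ x) :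
    0 < contMat (a :: l) 1 0 := by
  rw [contMat_cons_one_zero]
  obtain ⟨h₀, h₁⟩ := contMat_one_zero_nonneg_lt l hl
  omega

/-- The head of such a string is recovered as the ceiling of `K(l) / K(l.tail)`. -/
theorem eq_of_contMat_col_eq : ∀ {l l' : List ℤ}, (∀ a ∈ l, 2 ≤ a) → (∀ a ∈ l', 2 ≤ a) →
    contMat l 0 0 = contMat l' 0 0 → contMat l 1 0 = contMat l' 1 0 → l = l'
  | [], [], _, _, _, _ => rfl
  | [], b :: m, _, h', _, h₁ => by
    have := contMat_cons_one_zero_pos b m fun x hx => h' x (List.mem_cons_of_mem b hx)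
    simp_all
  | b :: m, [], h, _, _, h₁ => by
    have := contMat_cons_one_zero_pos b m fun x hx => h x (List.mem_cons_of_mem b hx)
    simp_all
  | b :: m, b' :: m', h, h', h₀, h₁ => by
    have hm := fun x hx => h x (List.mem_cons_of_mem b hx)
    have hm' := fun x hx => h' x (List.mem_cons_of_mem b' hx)
    obtain ⟨x₀, x₁⟩ := contMat_one_zero_nonneg_lt m hm
    obtain ⟨y₀, y₁⟩ := contMat_one_zero_nonneg_lt m' hm'
    simp only [contMat_cons_zero_zero, contMat_cons_one_zero] at h₀ h₁
    rw [h₁] at h₀ x₁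
    have hb : b = b' := le_antisymm (by nlinarith) (by nlinarith)
    subst hb
    rw [eq_of_contMat_col_eq hm hm' h₁ (by linarith)]

namespace Complementary

lemma succ_head {a : ℤ} {A B : List ℤ} (h : Complementary (a :: A) B) :
    Complementary ((a + 1) :: A) (B ++ [2]) :=
  h.tail (Or.inl ⟨a, A, B, rfl, rfl⟩)

lemma two_cons {A B : List ℤ} {b : ℤ} (h : Complementary A (B ++ [b])) :
    Complementary (2 :: A) (B ++ [b + 1]) :=
  h.tail (Or.inr ⟨A, B, b, rfl, rfl⟩)

@[elab_as_elim]
theorem induction {motive : ∀ A B, Complementary A B → Prop}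
    (base : motive [2] [2] .refl)
    (succ_head : ∀ a A B (h : Complementary (a :: A) B), motive _ _ h → motive _ _ h.succ_head)
    (two_cons : ∀ A B b (h : Complementary A (B ++ [b])), motive _ _ h → motive _ _ h.two_cons)
    {A B : List ℤ} (h : Complementary A B) : motive A B h := by
  suffices ∀ P (hP : Relation.ReflTransGen TwoFinalExp ([2], [2]) P), motive P.1 P.2 hP from
    this _ h
  intro P hP
  induction hP with
  | refl => exact base
  | tail hP hstep ih =>
    rcases hstep with ⟨a, A, B, rfl, rfl⟩ | ⟨A, B, b, rfl, rfl⟩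
    exacts [succ_head _ _ _ hP ih, two_cons _ _ _ hP ih]

lemma right_ne_nil {A B : List ℤ} (h : Complementary A B) : B ≠ [] := by
  induction h using Complementary.induction <;> simp

lemma two_le_of_mem_right {A B : List ℤ} (h : Complementary A B) : ∀ b ∈ B, 2 ≤ b := by
  induction h using Complementary.induction with
  | base => simp
  | succ_head a A B _ ih =>
    simp only [List.forall_mem_append, List.forall_mem_singleton]
    exact ⟨ih, le_rfl⟩
  | two_cons A B b _ ih =>
    simp only [List.forall_mem_append, List.forall_mem_singleton] at ih ⊢
    exact ⟨ih.1, by linarith [ih.2]⟩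

theorem contMat_right {A B : List ℤ} (h : Complementary A B) :
    contMat B = !![1, 0; 1, 1] * (contMat A)ᵀ * !![1, -1; 0, 1] := by
  induction h using Complementary.induction with
  | base => decide
  | succ_head a A B _ ih =>
    have hR : !![(1 : ℤ), 1; 0, 1]ᵀ * !![1, -1; 0, 1] = !![1, -1; 0, 1] * contStep 2 := by
      decide
    rw [contMat_append_singleton, ih, contMat_cons (a + 1), contStep_add_one,
      Matrix.mul_assoc !![1, 1; 0, 1], ← contMat_cons]
    simp only [transpose_mul, Matrix.mul_assoc, ← hR]
  | two_cons A B b _ ih =>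
    have hR : (contStep 2)ᵀ * !![1, -1; 0, 1] = !![1, -1; 0, 1] * !![(1 : ℤ), 0; -1, 1] := by
      decide
    rw [contMat_append_singleton, contStep_add_one', ← Matrix.mul_assoc,
      ← contMat_append_singleton, ih, contMat_cons]
    simp only [transpose_mul, Matrix.mul_assoc, ← hR]

theorem contMat_right_col {A B : List ℤ} (h : Complementary A B) :
    contMat B 0 0 = contMat A 0 0 ∧ contMat B 1 0 = contMat A 0 0 + contMat A 0 1 := by
  rw [h.contMat_right]
  simp [mul_apply, vecMul, dotProduct, Fin.sum_univ_two]

end Complementary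

theorem exists_complementary :
    ∀ {A : List ℤ}, A ≠ [] → (∀ a ∈ A, 2 ≤ a) → ∃ B, Complementary A B
  | a :: T, hne, hA => by
    have ha : 2 ≤ a := hA a List.mem_cons_self
    have hT : ∀ x ∈ T, 2 ≤ x := fun x hx => hA x (List.mem_cons_of_mem a hx)
    have h₂ : ∃ B, Complementary (2 :: T) B := by
      rcases eq_or_ne T [] with rfl | hT₀
      · exact ⟨[2], .refl⟩
      · obtain ⟨B, hB⟩ := exists_complementary hT₀ hT
        obtain ⟨C, b, rfl⟩ := B.eq_nil_or_concat'.resolve_left hB.right_ne_nil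
        exact ⟨_, hB.two_cons⟩
    clear hA hne
    induction a, ha using Int.leInduction with
    | base => exact h₂
    | succ a _ ih =>
      obtain ⟨B, hB⟩ := ih
      exact ⟨_, hB.succ_head⟩

theorem complementary_iff {A B : List ℤ} (hA₀ : A ≠ []) (hA : ∀ a ∈ A, 2 ≤ a)
    (hB : ∀ b ∈ B, 2 ≤ b) :
    Complementary A B ↔
      contMat B 0 0 = contMat A 0 0 ∧ contMat B 1 0 = contMat A 0 0 + contMat A 0 1 := by
  refine ⟨Complementary.contMat_right_col, fun ⟨h₀, h₁⟩ => ?_⟩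
  obtain ⟨B₀, hB₀⟩ := exists_complementary hA₀ hA
  obtain ⟨e₀, e₁⟩ := hB₀.contMat_right_col
  rwa [eq_of_contMat_col_eq hB hB₀.two_le_of_mem_right (h₀.trans e₀.symm) (h₁.trans e₁.symm)]

/-- `-contMat A 0 1` is `K` of `A` without its last entry; its bounds come from the first column
of the matrix of a complementary partner of `A`. -/
lemma neg_contMat_zero_one_pos_lt {A : List ℤ} (hA₀ : A ≠ []) (hA : ∀ a ∈ A, 2 ≤ a) :
    0 < -contMat A 0 1 ∧ -contMat A 0 1 < contMat A 0 0 := by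
  obtain ⟨B, hB⟩ := exists_complementary hA₀ hA
  obtain ⟨e₀, e₁⟩ := hB.contMat_right_col
  obtain ⟨c, M, rfl⟩ := List.exists_cons_of_ne_nil hB.right_ne_nil
  have h₁ := contMat_one_zero_nonneg_lt _ hB.two_le_of_mem_right
  have h₂ := contMat_cons_one_zero_pos c M fun x hx =>
    hB.two_le_of_mem_right x (List.mem_cons_of_mem c hx)
  omega

lemma eq_of_mul_modEq_one {p q x y : ℤ} (hx : 0 ≤ x) (hxp : x < p) (hy : 0 ≤ y) (hyp : y < p)
    (hqx : q * x ≡ 1 [ZMOD p]) (hqy : q * y ≡ 1 [ZMOD p]) : x = y := by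
  have hxy : x ≡ y [ZMOD p] :=
    calc x = x * 1 := (mul_one x).symm
      _ ≡ x * (q * y) [ZMOD p] := hqy.symm.mul_left x
      _ = q * x * y := by ring
      _ ≡ 1 * y [ZMOD p] := hqx.mul_right y
      _ = y := one_mul y
  rw [← Int.emod_eq_of_lt hx hxp, ← Int.emod_eq_of_lt hy hyp]
  exact hxy

lemma div_add_div_eq_one_iff {x p s r : ℤ} (hp : 0 < p) (hr : 0 < r) (hxp : IsCoprime x p)
    (hsr : IsCoprime s r) : (x : ℚ) / p + s / r = 1 ↔ r = p ∧ s = p - x := by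
  constructor
  · intro h
    have hpx : IsCoprime (p - x) p := by
      simpa [neg_add_eq_sub] using hxp.neg_left.add_mul_right_left 1
    have : (s : ℚ) / r = (p - x : ℤ) / p := by
      push_cast
      rw [sub_div, div_self (by positivity)]
      linarith
    obtain ⟨hs, hr⟩ := Rat.div_int_inj hr hp (Int.isCoprime_iff_gcd_eq_one.mp hsr)
      (Int.isCoprime_iff_gcd_eq_one.mp hpx) this
    exact ⟨hr, hs⟩
  · rintro ⟨rfl, rfl⟩
    push_cast
    field_simp
    ring

theorem complementary_iff_div_add_div_eq_one {A B : List ℤ} (hA₀ : A ≠ [])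
    (hA : ∀ a ∈ A, 2 ≤ a) (hB : ∀ b ∈ B, 2 ≤ b) :
    Complementary A B ↔
      ((-contMat A 0 1 : ℤ) : ℚ) / negCont A + negCont B.tail / negCont B = 1 := by
  obtain ⟨hp'₀, hp'p⟩ := neg_contMat_zero_one_pos_lt hA₀ hA
  rw [complementary_iff hA₀ hA hB, ← contMat_zero_zero A]
  rcases B with _ | ⟨c, M⟩
  · refine iff_of_false (fun h => ?_) (fun h => ?_)
    · have h₀ := h.1
      rw [contMat_nil, one_apply_eq] at h₀
      omega
    · simp only [List.tail_nil, negCont, Int.cast_one, div_one, add_eq_right, div_eq_zero_iff,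
        Int.cast_eq_zero] at h
      omega
  · have hr := contMat_one_zero_nonneg_lt _ hB
    rw [negCont_tail_cons, ← contMat_zero_zero (c :: M),
      div_add_div_eq_one_iff (by omega) (by omega) (isCoprime_neg_contMat_zero_one A)
        (isCoprime_contMat_one_zero _), sub_neg_eq_add]

theorem eq_neg_contMat_zero_one_of_mul_modEq_one {A : List ℤ} (hA₀ : A ≠ [])
    (hA : ∀ a ∈ A, 2 ≤ a) {x : ℤ} (hx₀ : 0 ≤ x) (hxA : x < negCont A)
    (hx₁ : negCont A.tail * x ≡ 1 [ZMOD negCont A]) : x = -contMat A 0 1 := by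
  obtain ⟨a, T, rfl⟩ := List.exists_cons_of_ne_nil hA₀
  obtain ⟨hp'₀, hp'p⟩ := neg_contMat_zero_one_pos_lt hA₀ hA
  rw [← contMat_zero_zero] at hxA hx₁
  rw [negCont_tail_cons] at hx₁
  exact eq_of_mul_modEq_one hx₀ hxA hp'₀.le hp'p hx₁ (contMat_one_zero_mul_neg_modEq_one _)

/-- Let `A`, `B` be integer strings with all entries at least 2, and set
`p = K(A)`, `q = K(A.tail)`, `r = K(B)`, `s = K(B.tail)`, so that `p > q > 0`
and `r > s > 0` with `gcd(p,q) = gcd(r,s) = 1`.  Let `q*` be the unique integer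
with `0 < q* < p` and `q·q* ≡ 1 (mod p)`.  Then `(A, B)` is complementary if and
only if `q*/p + s/r = 1` in `ℚ`. -/
theorem stmt5 (A B : List ℤ) (hA : ∀ a ∈ A, 2 ≤ a) (hB : ∀ b ∈ B, 2 ≤ b)
    (qs : ℤ) (hqs0 : 0 < qs) (hqsp : qs < negCont A)
    (hqs1 : negCont A.tail * qs ≡ 1 [ZMOD negCont A]) :
    Complementary A B ↔
      (qs : ℚ) / (negCont A : ℚ) + (negCont B.tail : ℚ) / (negCont B : ℚ) = 1 := by
  have hA₀ : A ≠ [] := by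
    rintro rfl
    simp only [negCont] at hqsp
    omega
  rw [complementary_iff_div_add_div_eq_one hA₀ hA hB,
    eq_neg_contMat_zero_one_of_mul_modEq_one hA₀ hA hqs0.le hqsp hqs1]
end
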